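/- Adequacy of the asymmetric logical relations: (1) if ∅ ⊢ t ≲ₙ t̲ : τ (the source term logically approximates the target term up to n steps at type τ) and t →ᵐ v in λτ with m ≤ n and v a value, then t̲ ⇓ in λu; (2) if ∅ ⊢ t ≳ₙ t̲ : τ and t̲ →ᵐ v̲ in λu with m ≤ n and v̲ a value, then t ⇓ in λτ. -/
import Mathlib


set_option maxHeartbeats 1000000

namespace FAC

/-! ## Source language λτ : simply-typed CBV lambda calculus -/

inductive Ty : Type
  | unit : Ty
  | bool : Ty
  | arr (a b : Ty) : Ty
  | prod (a b : Ty) : Ty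
  | sum (a b : Ty) : Ty
deriving DecidableEq

inductive STm : Type
  | var (n : ℕ)
  | unit | tt | ff
  | lam (τ : Ty) (t : STm)
  | app (t₁ t₂ : STm)
  | pair (t₁ t₂ : STm)
  | p1 (t : STm)
  | p2 (t : STm)
  | inl (t : STm)
  | inr (t : STm)
  | caseOf (t t₁ t₂ : STm)   -- branches bind de Bruijn index 0
  | seq (t₁ t₂ : STm)
  | tif (t t₁ t₂ : STm)
  | fixt (a b : Ty) (t : STm)
deriving DecidableEq

inductive SIsVal : STm → Prop
  | unit : SIsVal .unit
  | tt : SIsVal .tt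
  | ff : SIsVal .ff
  | lam {τ t} : SIsVal (.lam τ t)
  | pair {t₁ t₂} : SIsVal t₁ → SIsVal t₂ → SIsVal (.pair t₁ t₂)
  | inl {t} : SIsVal t → SIsVal (.inl t)
  | inr {t} : SIsVal t → SIsVal (.inr t)

def liftR (f : ℕ → ℕ) : ℕ → ℕ
  | 0 => 0
  | n+1 => f n + 1

def STm.rename (f : ℕ → ℕ) : STm → STm
  | .var n => .var (f n)
  | .unit => .unit
  | .tt => .tt
  | .ff => .ff
  | .lam τ t => .lam τ (t.rename (liftR f))
  | .app a b => .app (a.rename f) (b.rename f)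
  | .pair a b => .pair (a.rename f) (b.rename f)
  | .p1 t => .p1 (t.rename f)
  | .p2 t => .p2 (t.rename f)
  | .inl t => .inl (t.rename f)
  | .inr t => .inr (t.rename f)
  | .caseOf t a b => .caseOf (t.rename f) (a.rename (liftR f)) (b.rename (liftR f))
  | .seq a b => .seq (a.rename f) (b.rename f)
  | .tif t a b => .tif (t.rename f) (a.rename f) (b.rename f)
  | .fixt a b t => .fixt a b (t.rename f)

def liftS (σ : ℕ → STm) : ℕ → STm
  | 0 => .var 0
  | n+1 => (σ n).rename Nat.succ

def STm.subst (σ : ℕ → STm) : STm → STm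
  | .var n => σ n
  | .unit => .unit
  | .tt => .tt
  | .ff => .ff
  | .lam τ t => .lam τ (t.subst (liftS σ))
  | .app a b => .app (a.subst σ) (b.subst σ)
  | .pair a b => .pair (a.subst σ) (b.subst σ)
  | .p1 t => .p1 (t.subst σ)
  | .p2 t => .p2 (t.subst σ)
  | .inl t => .inl (t.subst σ)
  | .inr t => .inr (t.subst σ)
  | .caseOf t a b => .caseOf (t.subst σ) (a.subst (liftS σ)) (b.subst (liftS σ))
  | .seq a b => .seq (a.subst σ) (b.subst σ)
  | .tif t a b => .tif (t.subst σ) (a.subst σ) (b.subst σ)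
  | .fixt a b t => .fixt a b (t.subst σ)

/-- substitute `v` for de Bruijn index 0 in `t` -/
def STm.subst0 (t v : STm) : STm :=
  t.subst (fun n => match n with | 0 => v | n+1 => .var n)

/-- Typing judgement for λτ. -/
inductive HasTy : List Ty → STm → Ty → Prop
  | var {Γ n τ} : Γ[n]? = some τ → HasTy Γ (.var n) τ
  | unit {Γ} : HasTy Γ .unit .unit
  | tt {Γ} : HasTy Γ .tt .bool
  | ff {Γ} : HasTy Γ .ff .bool
  | lam {Γ τ τ' t} : HasTy (τ :: Γ) t τ' → HasTy Γ (.lam τ t) (.arr τ τ')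
  | app {Γ t t' τ τ'} : HasTy Γ t (.arr τ' τ) → HasTy Γ t' τ' → HasTy Γ (.app t t') τ
  | pair {Γ t₁ t₂ τ₁ τ₂} : HasTy Γ t₁ τ₁ → HasTy Γ t₂ τ₂ → HasTy Γ (.pair t₁ t₂) (.prod τ₁ τ₂)
  | p1 {Γ t τ₁ τ₂} : HasTy Γ t (.prod τ₁ τ₂) → HasTy Γ (.p1 t) τ₁
  | p2 {Γ t τ₁ τ₂} : HasTy Γ t (.prod τ₁ τ₂) → HasTy Γ (.p2 t) τ₂
  | inl {Γ t τ₁ τ₂} : HasTy Γ t τ₁ → HasTy Γ (.inl t) (.sum τ₁ τ₂)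
  | inr {Γ t τ₁ τ₂} : HasTy Γ t τ₂ → HasTy Γ (.inr t) (.sum τ₁ τ₂)
  | caseOf {Γ t t₁ t₂ τ₁ τ₂ τ} : HasTy Γ t (.sum τ₁ τ₂) →
      HasTy (τ₁ :: Γ) t₁ τ → HasTy (τ₂ :: Γ) t₂ τ → HasTy Γ (.caseOf t t₁ t₂) τ
  | seq {Γ t₁ t₂ τ} : HasTy Γ t₁ .unit → HasTy Γ t₂ τ → HasTy Γ (.seq t₁ t₂) τ
  | tif {Γ t t₁ t₂ τ} : HasTy Γ t .bool → HasTy Γ t₁ τ → HasTy Γ t₂ τ →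
      HasTy Γ (.tif t t₁ t₂) τ
  | fixt {Γ t a b} : HasTy Γ t (.arr (.arr a b) (.arr a b)) → HasTy Γ (.fixt a b t) (.arr a b)

/-- Small-step CBV reduction for λτ (evaluation contexts are rendered as
congruence rules enforcing left-to-right call-by-value order). -/
inductive SStep : STm → STm → Prop
  | app1 {t₁ t₁' t₂} : SStep t₁ t₁' → SStep (.app t₁ t₂) (.app t₁' t₂)
  | app2 {v t t'} : SIsVal v → SStep t t' → SStep (.app v t) (.app v t')
  | beta {τ t v} : SIsVal v → SStep (.app (.lam τ t) v) (t.subst0 v)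
  | pair1 {t₁ t₁' t₂} : SStep t₁ t₁' → SStep (.pair t₁ t₂) (.pair t₁' t₂)
  | pair2 {v t t'} : SIsVal v → SStep t t' → SStep (.pair v t) (.pair v t')
  | p1C {t t'} : SStep t t' → SStep (.p1 t) (.p1 t')
  | p2C {t t'} : SStep t t' → SStep (.p2 t) (.p2 t')
  | p1V {v₁ v₂} : SIsVal v₁ → SIsVal v₂ → SStep (.p1 (.pair v₁ v₂)) v₁
  | p2V {v₁ v₂} : SIsVal v₁ → SIsVal v₂ → SStep (.p2 (.pair v₁ v₂)) v₂
  | inlC {t t'} : SStep t t' → SStep (.inl t) (.inl t')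
  | inrC {t t'} : SStep t t' → SStep (.inr t) (.inr t')
  | caseC {t t' t₁ t₂} : SStep t t' → SStep (.caseOf t t₁ t₂) (.caseOf t' t₁ t₂)
  | caseL {v t₁ t₂} : SIsVal v → SStep (.caseOf (.inl v) t₁ t₂) (t₁.subst0 v)
  | caseR {v t₁ t₂} : SIsVal v → SStep (.caseOf (.inr v) t₁ t₂) (t₂.subst0 v)
  | seqC {t₁ t₁' t₂} : SStep t₁ t₁' → SStep (.seq t₁ t₂) (.seq t₁' t₂)
  | seqN {t} : SStep (.seq .unit t) t
  | tifC {t t' t₁ t₂} : SStep t t' → SStep (.tif t t₁ t₂) (.tif t' t₁ t₂)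
  | tifT {t₁ t₂} : SStep (.tif .tt t₁ t₂) t₁
  | tifF {t₁ t₂} : SStep (.tif .ff t₁ t₂) t₂
  | fixC {a b t t'} : SStep t t' → SStep (.fixt a b t) (.fixt a b t')
  | fixBeta {a b t} :
      SStep (.fixt a b (.lam (.arr a b) t))
        (t.subst0 (.lam a (.app ((STm.fixt a b (.lam (.arr a b) t)).rename Nat.succ) (.var 0))))

def SStepN : ℕ → STm → STm → Prop
  | 0, t, t' => t = t'
  | n+1, t, t'' => ∃ t', SStep t t' ∧ SStepN n t' t''

def SStepStar (t t' : STm) : Prop := ∃ n, SStepN n t t'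

/-- termination with a value -/
def SHalts (t : STm) : Prop := ∃ n v, SStepN n t v ∧ SIsVal v

end FAC
/-! ## Target language λu : untyped CBV lambda calculus with `wrong` -/

namespace FAC

inductive UTm : Type
  | var (n : ℕ)
  | unit | tt | ff
  | lam (t : UTm)
  | app (t₁ t₂ : UTm)
  | pair (t₁ t₂ : UTm)
  | p1 (t : UTm)
  | p2 (t : UTm)
  | inl (t : UTm)
  | inr (t : UTm)
  | caseOf (t t₁ t₂ : UTm)
  | seq (t₁ t₂ : UTm)
  | tif (t t₁ t₂ : UTm)
  | wrong
deriving DecidableEq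

inductive UIsVal : UTm → Prop
  | unit : UIsVal .unit
  | tt : UIsVal .tt
  | ff : UIsVal .ff
  | lam {t} : UIsVal (.lam t)
  | pair {t₁ t₂} : UIsVal t₁ → UIsVal t₂ → UIsVal (.pair t₁ t₂)
  | inl {t} : UIsVal t → UIsVal (.inl t)
  | inr {t} : UIsVal t → UIsVal (.inr t)

def UTm.rename (f : ℕ → ℕ) : UTm → UTm
  | .var n => .var (f n)
  | .unit => .unit
  | .tt => .tt
  | .ff => .ff
  | .lam t => .lam (t.rename (liftR f))
  | .app a b => .app (a.rename f) (b.rename f)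
  | .pair a b => .pair (a.rename f) (b.rename f)
  | .p1 t => .p1 (t.rename f)
  | .p2 t => .p2 (t.rename f)
  | .inl t => .inl (t.rename f)
  | .inr t => .inr (t.rename f)
  | .caseOf t a b => .caseOf (t.rename f) (a.rename (liftR f)) (b.rename (liftR f))
  | .seq a b => .seq (a.rename f) (b.rename f)
  | .tif t a b => .tif (t.rename f) (a.rename f) (b.rename f)
  | .wrong => .wrong

def liftU (σ : ℕ → UTm) : ℕ → UTm
  | 0 => .var 0
  | n+1 => (σ n).rename Nat.succ

def UTm.subst (σ : ℕ → UTm) : UTm → UTm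
  | .var n => σ n
  | .unit => .unit
  | .tt => .tt
  | .ff => .ff
  | .lam t => .lam (t.subst (liftU σ))
  | .app a b => .app (a.subst σ) (b.subst σ)
  | .pair a b => .pair (a.subst σ) (b.subst σ)
  | .p1 t => .p1 (t.subst σ)
  | .p2 t => .p2 (t.subst σ)
  | .inl t => .inl (t.subst σ)
  | .inr t => .inr (t.subst σ)
  | .caseOf t a b => .caseOf (t.subst σ) (a.subst (liftU σ)) (b.subst (liftU σ))
  | .seq a b => .seq (a.subst σ) (b.subst σ)
  | .tif t a b => .tif (t.subst σ) (a.subst σ) (b.subst σ)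
  | .wrong => .wrong

def UTm.subst0 (t v : UTm) : UTm :=
  t.subst (fun n => match n with | 0 => v | n+1 => .var n)

/-- Well-scopedness: all free variables are `< n`. -/
def UTm.ws : UTm → ℕ → Prop
  | .var m, n => m < n
  | .unit, _ => True
  | .tt, _ => True
  | .ff, _ => True
  | .lam t, n => t.ws (n+1)
  | .app a b, n => a.ws n ∧ b.ws n
  | .pair a b, n => a.ws n ∧ b.ws n
  | .p1 t, n => t.ws n
  | .p2 t, n => t.ws n
  | .inl t, n => t.ws n
  | .inr t, n => t.ws n
  | .caseOf t a b, n => t.ws n ∧ a.ws (n+1) ∧ b.ws (n+1)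
  | .seq a b, n => a.ws n ∧ b.ws n
  | .tif t a b, n => t.ws n ∧ a.ws n ∧ b.ws n
  | .wrong, _ => True

/-- Small-step CBV reduction for λu, with propagation of `wrong` out of any
non-trivial evaluation context and ill-typed eliminations stepping to `wrong`. -/
inductive UStep : UTm → UTm → Prop
  | app1 {t₁ t₁' t₂} : UStep t₁ t₁' → UStep (.app t₁ t₂) (.app t₁' t₂)
  | app2 {v t t'} : UIsVal v → UStep t t' → UStep (.app v t) (.app v t')
  | beta {t v} : UIsVal v → UStep (.app (.lam t) v) (t.subst0 v)
  | appW1 {t} : UStep (.app .wrong t) .wrong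
  | appW2 {v} : UIsVal v → UStep (.app v .wrong) .wrong
  | appWrong {v₁ v₂} : UIsVal v₁ → UIsVal v₂ → (∀ t, v₁ ≠ .lam t) → UStep (.app v₁ v₂) .wrong
  | pair1 {t₁ t₁' t₂} : UStep t₁ t₁' → UStep (.pair t₁ t₂) (.pair t₁' t₂)
  | pair2 {v t t'} : UIsVal v → UStep t t' → UStep (.pair v t) (.pair v t')
  | pairW1 {t} : UStep (.pair .wrong t) .wrong
  | pairW2 {v} : UIsVal v → UStep (.pair v .wrong) .wrong
  | p1C {t t'} : UStep t t' → UStep (.p1 t) (.p1 t')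
  | p2C {t t'} : UStep t t' → UStep (.p2 t) (.p2 t')
  | p1W : UStep (.p1 .wrong) .wrong
  | p2W : UStep (.p2 .wrong) .wrong
  | p1V {v₁ v₂} : UIsVal v₁ → UIsVal v₂ → UStep (.p1 (.pair v₁ v₂)) v₁
  | p2V {v₁ v₂} : UIsVal v₁ → UIsVal v₂ → UStep (.p2 (.pair v₁ v₂)) v₂
  | p1Wrong {v} : UIsVal v → (∀ a b, v ≠ .pair a b) → UStep (.p1 v) .wrong
  | p2Wrong {v} : UIsVal v → (∀ a b, v ≠ .pair a b) → UStep (.p2 v) .wrong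
  | inlC {t t'} : UStep t t' → UStep (.inl t) (.inl t')
  | inrC {t t'} : UStep t t' → UStep (.inr t) (.inr t')
  | inlW : UStep (.inl .wrong) .wrong
  | inrW : UStep (.inr .wrong) .wrong
  | caseC {t t' t₁ t₂} : UStep t t' → UStep (.caseOf t t₁ t₂) (.caseOf t' t₁ t₂)
  | caseW {t₁ t₂} : UStep (.caseOf .wrong t₁ t₂) .wrong
  | caseL {v t₁ t₂} : UIsVal v → UStep (.caseOf (.inl v) t₁ t₂) (t₁.subst0 v)
  | caseR {v t₁ t₂} : UIsVal v → UStep (.caseOf (.inr v) t₁ t₂) (t₂.subst0 v)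
  | caseWrong {v t₁ t₂} : UIsVal v → (∀ w, v ≠ .inl w) → (∀ w, v ≠ .inr w) →
      UStep (.caseOf v t₁ t₂) .wrong
  | seqC {t₁ t₁' t₂} : UStep t₁ t₁' → UStep (.seq t₁ t₂) (.seq t₁' t₂)
  | seqW {t} : UStep (.seq .wrong t) .wrong
  | seqN {t} : UStep (.seq .unit t) t
  | seqWrong {v t} : UIsVal v → v ≠ .unit → UStep (.seq v t) .wrong
  | tifC {t t' t₁ t₂} : UStep t t' → UStep (.tif t t₁ t₂) (.tif t' t₁ t₂)
  | tifW {t₁ t₂} : UStep (.tif .wrong t₁ t₂) .wrong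
  | tifT {t₁ t₂} : UStep (.tif .tt t₁ t₂) t₁
  | tifF {t₁ t₂} : UStep (.tif .ff t₁ t₂) t₂
  | tifWrong {v t₁ t₂} : UIsVal v → v ≠ .tt → v ≠ .ff → UStep (.tif v t₁ t₂) .wrong

def UStepN : ℕ → UTm → UTm → Prop
  | 0, t, t' => t = t'
  | n+1, t, t'' => ∃ t', UStep t t' ∧ UStepN n t' t''

def UStepStar (t t' : UTm) : Prop := ∃ n, UStepN n t t'

def UStepPlus (t t' : UTm) : Prop := ∃ n, 0 < n ∧ UStepN n t t'

/-- termination with a value (`wrong` is not a value) -/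
def UHalts (t : UTm) : Prop := ∃ n v, UStepN n t v ∧ UIsVal v

end FAC
/-! ## Type erasure and the Z combinator -/

namespace FAC

/-- the Z (call-by-value Y) combinator: `λf.(λx. f (λy. x x y)) (λx. f (λy. x x y))` -/
def Zcomb : UTm :=
  .lam (.app
    (.lam (.app (.var 1) (.lam (.app (.app (.var 1) (.var 1)) (.var 0)))))
    (.lam (.app (.var 1) (.lam (.app (.app (.var 1) (.var 1)) (.var 0))))))

/-- `λx. f (λy. x x y)`, for a given (closed) `f` -/
def gOf (f : UTm) : UTm :=
  .lam (.app (f.rename Nat.succ) (.lam (.app (.app (.var 1) (.var 1)) (.var 0))))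

/-- Type erasure from λτ to λu; `fix` is mapped to the Z combinator. -/
def erase : STm → UTm
  | .var n => .var n
  | .unit => .unit
  | .tt => .tt
  | .ff => .ff
  | .lam _ t => .lam (erase t)
  | .app a b => .app (erase a) (erase b)
  | .pair a b => .pair (erase a) (erase b)
  | .p1 t => .p1 (erase t)
  | .p2 t => .p2 (erase t)
  | .inl t => .inl (erase t)
  | .inr t => .inr (erase t)
  | .caseOf t a b => .caseOf (erase t) (erase a) (erase b)
  | .seq a b => .seq (erase a) (erase b)
  | .tif t a b => .tif (erase t) (erase a) (erase b)
  | .fixt _ _ t => .app Zcomb (erase t)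

/-! ## Dynamic type-checking wrappers protect/confine -/

/-- `wrap τ true = protect_τ`, `wrap τ false = confine_τ`. -/
def wrap : Ty → Bool → UTm
  | .unit, true => .lam (.var 0)
  | .bool, true => .lam (.var 0)
  | .unit, false => .lam (.seq (.var 0) .unit)
  | .bool, false => .lam (.tif (.var 0) .tt .ff)
  | .prod a b, p => .lam (.pair (.app (wrap a p) (.p1 (.var 0))) (.app (wrap b p) (.p2 (.var 0))))
  | .sum a b, p => .lam (.caseOf (.var 0)
      (.inl (.app (wrap a p) (.var 0)))
      (.inr (.app (wrap b p) (.var 0))))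
  | .arr a b, p => .lam (.lam (.app (wrap b p) (.app (.var 1) (.app (wrap a (!p)) (.var 0)))))

def protect (τ : Ty) : UTm := wrap τ true
def confine (τ : Ty) : UTm := wrap τ false

/-- the compiler: protect the erased term -/
def compile (τ : Ty) (t : STm) : UTm := .app (protect τ) (erase t)

/-! ## UVal and its tools -/

/-- the family of λτ types UVal_n -/
def UValTy : ℕ → Ty
  | 0 => .unit
  | n+1 => .sum .unit (.sum .unit (.sum .bool (.sum (.prod (UValTy n) (UValTy n))
      (.sum (.sum (UValTy n) (UValTy n)) (.arr (UValTy n) (UValTy n))))))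

def inUnk : STm := .inl .unit
def inUnit (v : STm) : STm := .inr (.inl v)
def inBool (v : STm) : STm := .inr (.inr (.inl v))
def inProd (v : STm) : STm := .inr (.inr (.inr (.inl v)))
def inSum (v : STm) : STm := .inr (.inr (.inr (.inr (.inl v))))
def inArr (v : STm) : STm := .inr (.inr (.inr (.inr (.inr v))))

def unkUVal : ℕ → STm
  | 0 => .unit
  | _+1 => inUnk

/-- the diverging term `omega_τ = fix_{Unit→τ} (λx:Unit→τ. x) unit` -/
def omegaTm (τ : Ty) : STm :=
  .app (.fixt .unit τ (.lam (.arr .unit τ) (.var 0))) .unit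

/-- `caseUVal_{Unit;n} : UVal_{n+1} → Unit` -/
def caseUnitU (n : ℕ) : STm :=
  .lam (UValTy (n+1)) (.caseOf (.var 0) (omegaTm .unit)
    (.caseOf (.var 0) (.var 0) (omegaTm .unit)))

def caseBoolU (n : ℕ) : STm :=
  .lam (UValTy (n+1)) (.caseOf (.var 0) (omegaTm .bool)
    (.caseOf (.var 0) (omegaTm .bool)
      (.caseOf (.var 0) (.var 0) (omegaTm .bool))))

def caseProdU (n : ℕ) : STm :=
  .lam (UValTy (n+1)) (.caseOf (.var 0) (omegaTm (.prod (UValTy n) (UValTy n)))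
    (.caseOf (.var 0) (omegaTm (.prod (UValTy n) (UValTy n)))
      (.caseOf (.var 0) (omegaTm (.prod (UValTy n) (UValTy n)))
        (.caseOf (.var 0) (.var 0) (omegaTm (.prod (UValTy n) (UValTy n)))))))

def caseSumU (n : ℕ) : STm :=
  .lam (UValTy (n+1)) (.caseOf (.var 0) (omegaTm (.sum (UValTy n) (UValTy n)))
    (.caseOf (.var 0) (omegaTm (.sum (UValTy n) (UValTy n)))
      (.caseOf (.var 0) (omegaTm (.sum (UValTy n) (UValTy n)))
        (.caseOf (.var 0) (omegaTm (.sum (UValTy n) (UValTy n)))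
          (.caseOf (.var 0) (.var 0) (omegaTm (.sum (UValTy n) (UValTy n))))))))

/-- `caseUVal_{→;n} : UVal_{n+1} → UVal_n → UVal_n` -/
def caseArrU (n : ℕ) : STm :=
  .lam (UValTy (n+1)) (.lam (UValTy n)
    (.caseOf (.var 1) (omegaTm (UValTy n))
      (.caseOf (.var 0) (omegaTm (UValTy n))
        (.caseOf (.var 0) (omegaTm (UValTy n))
          (.caseOf (.var 0) (omegaTm (UValTy n))
            (.caseOf (.var 0) (omegaTm (UValTy n))
              (.app (.var 0) (.var 5))))))))

/-- `updown d true n = upgrade_{n;d} : UVal_n → UVal_{n+d}`,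
    `updown d false n = downgrade_{n;d} : UVal_{n+d} → UVal_n`. -/
def updown (d : ℕ) : Bool → ℕ → STm
  | up, 0 => if up then .lam (UValTy 0) (unkUVal d) else .lam (UValTy d) (unkUVal 0)
  | up, n+1 =>
    let sm := updown d up n
    let op := updown d (!up) n
    let aTy := if up then UValTy (n+1) else UValTy (n+d+1)
    let zTy := if up then UValTy (n+d) else UValTy n
    .lam aTy (.caseOf (.var 0) inUnk
      (.caseOf (.var 0) (inUnit (.var 0))
        (.caseOf (.var 0) (inBool (.var 0))
          (.caseOf (.var 0)
            (inProd (.pair (.app sm (.p1 (.var 0))) (.app sm (.p2 (.var 0)))))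
            (.caseOf (.var 0)
              (inSum (.caseOf (.var 0) (.inl (.app sm (.var 0))) (.inr (.app sm (.var 0)))))
              (inArr (.lam zTy (.app sm (.app (.var 1) (.app op (.var 0)))))))))))

def upgrade (n d : ℕ) : STm := updown d true n
def downgrade (n d : ℕ) : STm := updown d false n

/-! ## inject / extract -/

/-- `(injext n τ).1 = inject_{τ;n} : τ → UVal_n` and
    `(injext n τ).2 = extract_{τ;n} : UVal_n → τ`. -/
def injext : ℕ → Ty → STm × STm
  | 0, τ => (.lam τ (omegaTm (UValTy 0)), .lam (UValTy 0) (omegaTm τ))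
  | n+1, τ =>
    match τ with
    | .unit => (.lam .unit (inUnit (.var 0)), caseUnitU n)
    | .bool => (.lam .bool (inBool (.var 0)), caseBoolU n)
    | .prod a b =>
      (.lam (.prod a b) (inProd (.pair
          (.app (injext n a).1 (.p1 (.var 0)))
          (.app (injext n b).1 (.p2 (.var 0))))),
       .lam (UValTy (n+1)) (.pair
          (.app (injext n a).2 (.p1 (.app (caseProdU n) (.var 0))))
          (.app (injext n b).2 (.p2 (.app (caseProdU n) (.var 0))))))
    | .sum a b =>
      (.lam (.sum a b) (inSum (.caseOf (.var 0)
          (.inl (.app (injext n a).1 (.var 0)))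
          (.inr (.app (injext n b).1 (.var 0))))),
       .lam (UValTy (n+1)) (.caseOf (.app (caseSumU n) (.var 0))
          (.inl (.app (injext n a).2 (.var 0)))
          (.inr (.app (injext n b).2 (.var 0)))))
    | .arr a b =>
      (.lam (.arr a b) (inArr (.lam (UValTy n)
          (.app (injext n b).1 (.app (.var 1) (.app (injext n a).2 (.var 0)))))),
       .lam (UValTy (n+1)) (.lam a
          (.app (injext n b).2
            (.app (.app (caseArrU n) (.var 1)) (.app (injext n a).1 (.var 0))))))

def injectTm (n : ℕ) (τ : Ty) : STm := (injext n τ).1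
def extractTm (n : ℕ) (τ : Ty) : STm := (injext n τ).2

end FAC
/-! ## Emulation of λu terms in UVal_n -/

namespace FAC

/-- `emulate n t̲` : the approximate back-translation of a λu term into a λτ term
of type `UVal_n`. -/
def emulate (n : ℕ) : UTm → STm
  | .var i => .var i
  | .unit => .app (downgrade n 1) (inUnit .unit)
  | .tt => .app (downgrade n 1) (inBool .tt)
  | .ff => .app (downgrade n 1) (inBool .ff)
  | .lam t => .app (downgrade n 1) (inArr (.lam (UValTy n) (emulate n t)))
  | .app t₁ t₂ =>
      .app (.app (caseArrU n) (.app (upgrade n 1) (emulate n t₁))) (emulate n t₂)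
  | .pair t₁ t₂ => .app (downgrade n 1) (inProd (.pair (emulate n t₁) (emulate n t₂)))
  | .p1 t => .p1 (.app (caseProdU n) (.app (upgrade n 1) (emulate n t)))
  | .p2 t => .p2 (.app (caseProdU n) (.app (upgrade n 1) (emulate n t)))
  | .inl t => .app (downgrade n 1) (inSum (.inl (emulate n t)))
  | .inr t => .app (downgrade n 1) (inSum (.inr (emulate n t)))
  | .caseOf t t₁ t₂ =>
      .caseOf (.app (caseSumU n) (.app (upgrade n 1) (emulate n t)))
        (emulate n t₁) (emulate n t₂)
  | .seq t₁ t₂ => .seq (.app (caseUnitU n) (.app (upgrade n 1) (emulate n t₁))) (emulate n t₂)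
  | .tif t t₁ t₂ =>
      .tif (.app (caseBoolU n) (.app (upgrade n 1) (emulate n t)))
        (emulate n t₁) (emulate n t₂)
  | .wrong => omegaTm (UValTy n)

/-! ## Pseudo-types -/

inductive Prec : Type
  | precise | imprecise
deriving DecidableEq

/-- pseudo-types: λτ types together with the token type `EmulDV_{n;p}` -/
inductive PTy : Type
  | unit : PTy
  | bool : PTy
  | arr (a b : PTy) : PTy
  | prod (a b : PTy) : PTy
  | sum (a b : PTy) : PTy
  | emul (n : ℕ) (p : Prec) : PTy
deriving DecidableEq

/-- conversion of pseudo-types to λτ types: `EmulDV_{n;p}` becomes `UVal_n` -/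
def repEmul : PTy → Ty
  | .unit => .unit
  | .bool => .bool
  | .arr a b => .arr (repEmul a) (repEmul b)
  | .prod a b => .prod (repEmul a) (repEmul b)
  | .sum a b => .sum (repEmul a) (repEmul b)
  | .emul n _ => UValTy n

/-- embedding of λτ types into pseudo-types -/
def Ty.toP : Ty → PTy
  | .unit => .unit
  | .bool => .bool
  | .arr a b => .arr a.toP b.toP
  | .prod a b => .prod a.toP b.toP
  | .sum a b => .sum a.toP b.toP

def PTy.weight : PTy → ℕ
  | .unit => 1
  | .bool => 1
  | .arr a b => a.weight + b.weight + 1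
  | .prod a b => a.weight + b.weight + 1
  | .sum a b => a.weight + b.weight + 1
  | .emul n _ => 2 * 3 ^ n

/-! ## Evaluation contexts -/

inductive SEC : Type
  | hole
  | appL (C : SEC) (t : STm)
  | appR (v : STm) (C : SEC)
  | pairL (C : SEC) (t : STm)
  | pairR (v : STm) (C : SEC)
  | p1 (C : SEC)
  | p2 (C : SEC)
  | inl (C : SEC)
  | inr (C : SEC)
  | caseOf (C : SEC) (t₁ t₂ : STm)
  | seq (C : SEC) (t : STm)
  | tif (C : SEC) (t₁ t₂ : STm)
  | fixt (a b : Ty) (C : SEC)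

def SEC.ok : SEC → Prop
  | .hole => True
  | .appL C _ => C.ok
  | .appR v C => SIsVal v ∧ C.ok
  | .pairL C _ => C.ok
  | .pairR v C => SIsVal v ∧ C.ok
  | .p1 C => C.ok
  | .p2 C => C.ok
  | .inl C => C.ok
  | .inr C => C.ok
  | .caseOf C _ _ => C.ok
  | .seq C _ => C.ok
  | .tif C _ _ => C.ok
  | .fixt _ _ C => C.ok

def SEC.plug : SEC → STm → STm
  | .hole, t => t
  | .appL C u, t => .app (C.plug t) u
  | .appR v C, t => .app v (C.plug t)
  | .pairL C u, t => .pair (C.plug t) u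
  | .pairR v C, t => .pair v (C.plug t)
  | .p1 C, t => .p1 (C.plug t)
  | .p2 C, t => .p2 (C.plug t)
  | .inl C, t => .inl (C.plug t)
  | .inr C, t => .inr (C.plug t)
  | .caseOf C a b, t => .caseOf (C.plug t) a b
  | .seq C u, t => .seq (C.plug t) u
  | .tif C a b, t => .tif (C.plug t) a b
  | .fixt a b C, t => .fixt a b (C.plug t)

inductive UEC : Type
  | hole
  | appL (C : UEC) (t : UTm)
  | appR (v : UTm) (C : UEC)
  | pairL (C : UEC) (t : UTm)
  | pairR (v : UTm) (C : UEC)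
  | p1 (C : UEC)
  | p2 (C : UEC)
  | inl (C : UEC)
  | inr (C : UEC)
  | caseOf (C : UEC) (t₁ t₂ : UTm)
  | seq (C : UEC) (t : UTm)
  | tif (C : UEC) (t₁ t₂ : UTm)

def UEC.ok : UEC → Prop
  | .hole => True
  | .appL C _ => C.ok
  | .appR v C => UIsVal v ∧ C.ok
  | .pairL C _ => C.ok
  | .pairR v C => UIsVal v ∧ C.ok
  | .p1 C => C.ok
  | .p2 C => C.ok
  | .inl C => C.ok
  | .inr C => C.ok
  | .caseOf C _ _ => C.ok
  | .seq C _ => C.ok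
  | .tif C _ _ => C.ok

def UEC.plug : UEC → UTm → UTm
  | .hole, t => t
  | .appL C u, t => .app (C.plug t) u
  | .appR v C, t => .app v (C.plug t)
  | .pairL C u, t => .pair (C.plug t) u
  | .pairR v C, t => .pair v (C.plug t)
  | .p1 C, t => .p1 (C.plug t)
  | .p2 C, t => .p2 (C.plug t)
  | .inl C, t => .inl (C.plug t)
  | .inr C, t => .inr (C.plug t)
  | .caseOf C a b, t => .caseOf (C.plug t) a b
  | .seq C u, t => .seq (C.plug t) u
  | .tif C a b, t => .tif (C.plug t) a b

end FAC
/-! ## The step-indexed, asymmetric, cross-language logical relations -/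

namespace FAC

/-- direction of approximation: `lt` is ≲ and `gt` is ≳ -/
inductive Dir : Type
  | lt | gt
deriving DecidableEq

/-- the observation relation `O(W)_□` on worlds `W = (k)` -/
def Obs (dir : Dir) (k : ℕ) (ts : STm) (tu : UTm) : Prop :=
  match dir with
  | .lt => (∃ m ≤ k, ∃ v, SStepN m ts v ∧ SIsVal v) → UHalts tu
  | .gt => (∃ m ≤ k, ∃ v, UStepN m tu v ∧ UIsVal v) → SHalts ts

/-- The value relation `(W, vs, vu) ∈ V⟦τ̂⟧_dir`, defined by well-founded
recursion on the lexicographic pair (world level, weight of the pseudo-type).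
The term and continuation relations of the biorthogonal definition are
inlined at the recursive occurrences. -/
def ValRel (dir : Dir) (k : ℕ) (τ : PTy) (vs : STm) (vu : UTm) : Prop :=
  match τ with
  | .unit => HasTy [] vs .unit ∧ vu.ws 0 ∧ vs = .unit ∧ vu = .unit
  | .bool => HasTy [] vs .bool ∧ vu.ws 0 ∧
      ((vs = .tt ∧ vu = .tt) ∨ (vs = .ff ∧ vu = .ff))
  | .prod a b =>
      HasTy [] vs (repEmul (.prod a b)) ∧ vu.ws 0 ∧
      ∃ v₁ v₂ u₁ u₂, vs = .pair v₁ v₂ ∧ vu = .pair u₁ u₂ ∧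
        SIsVal v₁ ∧ SIsVal v₂ ∧ UIsVal u₁ ∧ UIsVal u₂ ∧
        (∀ j, j + 1 ≤ k → ValRel dir j a v₁ u₁ ∧ ValRel dir j b v₂ u₂)
  | .sum a b =>
      HasTy [] vs (repEmul (.sum a b)) ∧ vu.ws 0 ∧
      ((∃ v u, vs = .inl v ∧ vu = .inl u ∧ SIsVal v ∧ UIsVal u ∧
          (∀ j, j + 1 ≤ k → ValRel dir j a v u)) ∨
       (∃ v u, vs = .inr v ∧ vu = .inr u ∧ SIsVal v ∧ UIsVal u ∧
          (∀ j, j + 1 ≤ k → ValRel dir j b v u)))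
  | .arr a b =>
      HasTy [] vs (repEmul (.arr a b)) ∧ vu.ws 0 ∧
      ∃ ts tu, vs = .lam (repEmul a) ts ∧ vu = .lam tu ∧
        ∀ j, j < k → ∀ vs' vu', SIsVal vs' → UIsVal vu' → ValRel dir j a vs' vu' →
          -- inlined term relation at type b, world j
          ∀ Cs Cu, SEC.ok Cs → UEC.ok Cu →
            (∀ i, i ≤ j → ∀ ws wu, SIsVal ws → UIsVal wu → ValRel dir i b ws wu →
              Obs dir i (Cs.plug ws) (Cu.plug wu)) →
            Obs dir j (Cs.plug (ts.subst0 vs')) (Cu.plug (tu.subst0 vu'))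
  | .emul 0 p => HasTy [] vs (UValTy 0) ∧ vu.ws 0 ∧ vs = .unit ∧ p = .imprecise
  | .emul (n+1) p =>
      HasTy [] vs (UValTy (n+1)) ∧ vu.ws 0 ∧
      ((vs = inUnk ∧ p = .imprecise) ∨
       (∃ v, vs = inUnit v ∧ ValRel dir k .unit v vu) ∨
       (∃ v, vs = inBool v ∧ ValRel dir k .bool v vu) ∨
       (∃ v, vs = inProd v ∧ ValRel dir k (.prod (.emul n p) (.emul n p)) v vu) ∨
       (∃ v, vs = inSum v ∧ ValRel dir k (.sum (.emul n p) (.emul n p)) v vu) ∨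
       (∃ v, vs = inArr v ∧ ValRel dir k (.arr (.emul n p) (.emul n p)) v vu))
termination_by (k, τ.weight)
decreasing_by
  all_goals simp_wf
  all_goals try (exact Prod.Lex.left _ _ (by omega))
  all_goals
    refine Prod.Lex.right _ ?_
  all_goals simp [PTy.weight, pow_succ]
  all_goals nlinarith [Nat.one_le_two_pow (n := n), Nat.one_le_pow n 3 (by omega)]

end FAC
namespace FAC

/-- continuation (evaluation-context) relation: biorthogonality -/
def ContRel (dir : Dir) (k : ℕ) (τ : PTy) (Cs : SEC) (Cu : UEC) : Prop :=
  Cs.ok ∧ Cu.ok ∧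
  ∀ i, i ≤ k → ∀ vs vu, SIsVal vs → UIsVal vu → ValRel dir i τ vs vu →
    Obs dir i (Cs.plug vs) (Cu.plug vu)

/-- term relation -/
def TermRel (dir : Dir) (k : ℕ) (τ : PTy) (t : STm) (u : UTm) : Prop :=
  ∀ Cs Cu, ContRel dir k τ Cs Cu → Obs dir k (Cs.plug t) (Cu.plug u)

/-- relation on closing substitutions instantiating a pseudo-context -/
def EnvRel (dir : Dir) (k : ℕ) (Γ : List PTy) (γs : ℕ → STm) (γu : ℕ → UTm) : Prop :=
  ∀ i τ, Γ[i]? = some τ →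
    SIsVal (γs i) ∧ UIsVal (γu i) ∧ ValRel dir k τ (γs i) (γu i)

/-- the logical relation `Γ̂ ⊢ t □ₙ t̲ : τ̂` on open terms, up to `n` steps -/
def LogRelN (dir : Dir) (n : ℕ) (Γ : List PTy) (t : STm) (u : UTm) (τ : PTy) : Prop :=
  HasTy (Γ.map repEmul) t (repEmul τ) ∧ u.ws Γ.length ∧
  ∀ k, k ≤ n → ∀ γs γu, EnvRel dir k Γ γs γu →
    TermRel dir k τ (t.subst γs) (u.subst γu)

/-- `Γ̂ ⊢ t □ t̲ : τ̂` : related up to any number of steps -/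
def LogRel (dir : Dir) (Γ : List PTy) (t : STm) (u : UTm) (τ : PTy) : Prop :=
  ∀ n, LogRelN dir n Γ t u τ

/-! ## Program contexts -/

inductive SPC : Type
  | hole
  | lam (τ : Ty) (C : SPC)
  | appL (C : SPC) (t : STm)
  | appR (t : STm) (C : SPC)
  | pairL (C : SPC) (t : STm)
  | pairR (t : STm) (C : SPC)
  | p1 (C : SPC)
  | p2 (C : SPC)
  | inl (C : SPC)
  | inr (C : SPC)
  | caseS (C : SPC) (t₁ t₂ : STm)
  | caseL (t : STm) (C : SPC) (t₂ : STm)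
  | caseR (t t₁ : STm) (C : SPC)
  | seqL (C : SPC) (t : STm)
  | seqR (t : STm) (C : SPC)
  | tifC (C : SPC) (t₁ t₂ : STm)
  | tifT (t : STm) (C : SPC) (t₂ : STm)
  | tifF (t t₁ : STm) (C : SPC)
  | fixt (a b : Ty) (C : SPC)

def SPC.plug : SPC → STm → STm
  | .hole, t => t
  | .lam τ C, t => .lam τ (C.plug t)
  | .appL C u, t => .app (C.plug t) u
  | .appR u C, t => .app u (C.plug t)
  | .pairL C u, t => .pair (C.plug t) u
  | .pairR u C, t => .pair u (C.plug t)
  | .p1 C, t => .p1 (C.plug t)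
  | .p2 C, t => .p2 (C.plug t)
  | .inl C, t => .inl (C.plug t)
  | .inr C, t => .inr (C.plug t)
  | .caseS C a b, t => .caseOf (C.plug t) a b
  | .caseL u C b, t => .caseOf u (C.plug t) b
  | .caseR u a C, t => .caseOf u a (C.plug t)
  | .seqL C u, t => .seq (C.plug t) u
  | .seqR u C, t => .seq u (C.plug t)
  | .tifC C a b, t => .tif (C.plug t) a b
  | .tifT u C b, t => .tif u (C.plug t) b
  | .tifF u a C, t => .tif u a (C.plug t)
  | .fixt a b C, t => .fixt a b (C.plug t)

/-- context typing `⊢ C : (Γ',τ') → (Γ,τ)` -/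
inductive SPCTy : SPC → List Ty → Ty → List Ty → Ty → Prop
  | hole {Γ τ} : SPCTy .hole Γ τ Γ τ
  | lam {C Γ' τ' Γ σ τ} : SPCTy C Γ' τ' (σ :: Γ) τ → SPCTy (.lam σ C) Γ' τ' Γ (.arr σ τ)
  | appL {C Γ' τ' Γ a b t} : SPCTy C Γ' τ' Γ (.arr a b) → HasTy Γ t a →
      SPCTy (.appL C t) Γ' τ' Γ b
  | appR {C Γ' τ' Γ a b t} : HasTy Γ t (.arr a b) → SPCTy C Γ' τ' Γ a →
      SPCTy (.appR t C) Γ' τ' Γ b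
  | pairL {C Γ' τ' Γ a b t} : SPCTy C Γ' τ' Γ a → HasTy Γ t b →
      SPCTy (.pairL C t) Γ' τ' Γ (.prod a b)
  | pairR {C Γ' τ' Γ a b t} : HasTy Γ t a → SPCTy C Γ' τ' Γ b →
      SPCTy (.pairR t C) Γ' τ' Γ (.prod a b)
  | p1 {C Γ' τ' Γ a b} : SPCTy C Γ' τ' Γ (.prod a b) → SPCTy (.p1 C) Γ' τ' Γ a
  | p2 {C Γ' τ' Γ a b} : SPCTy C Γ' τ' Γ (.prod a b) → SPCTy (.p2 C) Γ' τ' Γ b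
  | inl {C Γ' τ' Γ a b} : SPCTy C Γ' τ' Γ a → SPCTy (.inl C) Γ' τ' Γ (.sum a b)
  | inr {C Γ' τ' Γ a b} : SPCTy C Γ' τ' Γ b → SPCTy (.inr C) Γ' τ' Γ (.sum a b)
  | caseS {C Γ' τ' Γ a b τ t₁ t₂} : SPCTy C Γ' τ' Γ (.sum a b) →
      HasTy (a :: Γ) t₁ τ → HasTy (b :: Γ) t₂ τ → SPCTy (.caseS C t₁ t₂) Γ' τ' Γ τ
  | caseL {C Γ' τ' Γ a b τ t t₂} : HasTy Γ t (.sum a b) →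
      SPCTy C Γ' τ' (a :: Γ) τ → HasTy (b :: Γ) t₂ τ → SPCTy (.caseL t C t₂) Γ' τ' Γ τ
  | caseR {C Γ' τ' Γ a b τ t t₁} : HasTy Γ t (.sum a b) →
      HasTy (a :: Γ) t₁ τ → SPCTy C Γ' τ' (b :: Γ) τ → SPCTy (.caseR t t₁ C) Γ' τ' Γ τ
  | seqL {C Γ' τ' Γ τ t} : SPCTy C Γ' τ' Γ .unit → HasTy Γ t τ →
      SPCTy (.seqL C t) Γ' τ' Γ τ
  | seqR {C Γ' τ' Γ τ t} : HasTy Γ t .unit → SPCTy C Γ' τ' Γ τ →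
      SPCTy (.seqR t C) Γ' τ' Γ τ
  | tifC {C Γ' τ' Γ τ t₁ t₂} : SPCTy C Γ' τ' Γ .bool → HasTy Γ t₁ τ → HasTy Γ t₂ τ →
      SPCTy (.tifC C t₁ t₂) Γ' τ' Γ τ
  | tifT {C Γ' τ' Γ τ t t₂} : HasTy Γ t .bool → SPCTy C Γ' τ' Γ τ → HasTy Γ t₂ τ →
      SPCTy (.tifT t C t₂) Γ' τ' Γ τ
  | tifF {C Γ' τ' Γ τ t t₁} : HasTy Γ t .bool → HasTy Γ t₁ τ → SPCTy C Γ' τ' Γ τ →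
      SPCTy (.tifF t t₁ C) Γ' τ' Γ τ
  | fixt {C Γ' τ' Γ a b} : SPCTy C Γ' τ' Γ (.arr (.arr a b) (.arr a b)) →
      SPCTy (.fixt a b C) Γ' τ' Γ (.arr a b)

inductive UPC : Type
  | hole
  | lam (C : UPC)
  | appL (C : UPC) (t : UTm)
  | appR (t : UTm) (C : UPC)
  | pairL (C : UPC) (t : UTm)
  | pairR (t : UTm) (C : UPC)
  | p1 (C : UPC)
  | p2 (C : UPC)
  | inl (C : UPC)
  | inr (C : UPC)
  | caseS (C : UPC) (t₁ t₂ : UTm)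
  | caseL (t : UTm) (C : UPC) (t₂ : UTm)
  | caseR (t t₁ : UTm) (C : UPC)
  | seqL (C : UPC) (t : UTm)
  | seqR (t : UTm) (C : UPC)
  | tifC (C : UPC) (t₁ t₂ : UTm)
  | tifT (t : UTm) (C : UPC) (t₂ : UTm)
  | tifF (t t₁ : UTm) (C : UPC)

def UPC.plug : UPC → UTm → UTm
  | .hole, t => t
  | .lam C, t => .lam (C.plug t)
  | .appL C u, t => .app (C.plug t) u
  | .appR u C, t => .app u (C.plug t)
  | .pairL C u, t => .pair (C.plug t) u
  | .pairR u C, t => .pair u (C.plug t)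
  | .p1 C, t => .p1 (C.plug t)
  | .p2 C, t => .p2 (C.plug t)
  | .inl C, t => .inl (C.plug t)
  | .inr C, t => .inr (C.plug t)
  | .caseS C a b, t => .caseOf (C.plug t) a b
  | .caseL u C b, t => .caseOf u (C.plug t) b
  | .caseR u a C, t => .caseOf u a (C.plug t)
  | .seqL C u, t => .seq (C.plug t) u
  | .seqR u C, t => .seq u (C.plug t)
  | .tifC C a b, t => .tif (C.plug t) a b
  | .tifT u C b, t => .tif u (C.plug t) b
  | .tifF u a C, t => .tif u a (C.plug t)

/-- `UPCWs C m n` : context `C` maps terms with `m` free variables (the hole's scope)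
to terms with `n` free variables (`⊢ C : m → n`). -/
inductive UPCWs : UPC → ℕ → ℕ → Prop
  | hole {n} : UPCWs .hole n n
  | lam {C m n} : UPCWs C m (n+1) → UPCWs (.lam C) m n
  | appL {C m n t} : UPCWs C m n → UTm.ws t n → UPCWs (.appL C t) m n
  | appR {C m n t} : UTm.ws t n → UPCWs C m n → UPCWs (.appR t C) m n
  | pairL {C m n t} : UPCWs C m n → UTm.ws t n → UPCWs (.pairL C t) m n
  | pairR {C m n t} : UTm.ws t n → UPCWs C m n → UPCWs (.pairR t C) m n
  | p1 {C m n} : UPCWs C m n → UPCWs (.p1 C) m n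
  | p2 {C m n} : UPCWs C m n → UPCWs (.p2 C) m n
  | inl {C m n} : UPCWs C m n → UPCWs (.inl C) m n
  | inr {C m n} : UPCWs C m n → UPCWs (.inr C) m n
  | caseS {C m n t₁ t₂} : UPCWs C m n → UTm.ws t₁ (n+1) → UTm.ws t₂ (n+1) →
      UPCWs (.caseS C t₁ t₂) m n
  | caseL {C m n t t₂} : UTm.ws t n → UPCWs C m (n+1) → UTm.ws t₂ (n+1) →
      UPCWs (.caseL t C t₂) m n
  | caseR {C m n t t₁} : UTm.ws t n → UTm.ws t₁ (n+1) → UPCWs C m (n+1) →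
      UPCWs (.caseR t t₁ C) m n
  | seqL {C m n t} : UPCWs C m n → UTm.ws t n → UPCWs (.seqL C t) m n
  | seqR {C m n t} : UTm.ws t n → UPCWs C m n → UPCWs (.seqR t C) m n
  | tifC {C m n t₁ t₂} : UPCWs C m n → UTm.ws t₁ n → UTm.ws t₂ n →
      UPCWs (.tifC C t₁ t₂) m n
  | tifT {C m n t t₂} : UTm.ws t n → UPCWs C m n → UTm.ws t₂ n →
      UPCWs (.tifT t C t₂) m n
  | tifF {C m n t t₁} : UTm.ws t n → UTm.ws t₁ n → UPCWs C m n →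
      UPCWs (.tifF t t₁ C) m n

/-! ## Contextual equivalence -/

/-- `t₁ ≃ctx t₂ : τ` in λτ (for closed terms) -/
def SCtxEq (t₁ t₂ : STm) (τ : Ty) : Prop :=
  ∀ C τ', SPCTy C [] τ [] τ' → (SHalts (C.plug t₁) ↔ SHalts (C.plug t₂))

/-- `t̲₁ ≃ctx t̲₂` in λu (for closed terms) -/
def UCtxEq (u₁ u₂ : UTm) : Prop :=
  ∀ C, UPCWs C 0 0 → (UHalts (C.plug u₁) ↔ UHalts (C.plug u₂))

/-! ## Emulation of λu program contexts -/

/-- `emulateC n C̲` : back-translation of a λu program context into a λτ program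
context with hole of type `UVal_n`. -/
def emulateC (n : ℕ) : UPC → SPC
  | .hole => .hole
  | .lam C => .appR (downgrade n 1)
      (.inr (.inr (.inr (.inr (.inr (.lam (UValTy n) (emulateC n C)))))))
  | .appL C t => .appL (.appR (caseArrU n) (.appR (upgrade n 1) (emulateC n C))) (emulate n t)
  | .appR t C => .appR (.app (caseArrU n) (.app (upgrade n 1) (emulate n t))) (emulateC n C)
  | .pairL C t => .appR (downgrade n 1)
      (.inr (.inr (.inr (.inl (.pairL (emulateC n C) (emulate n t))))))
  | .pairR t C => .appR (downgrade n 1)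
      (.inr (.inr (.inr (.inl (.pairR (emulate n t) (emulateC n C))))))
  | .p1 C => .p1 (.appR (caseProdU n) (.appR (upgrade n 1) (emulateC n C)))
  | .p2 C => .p2 (.appR (caseProdU n) (.appR (upgrade n 1) (emulateC n C)))
  | .inl C => .appR (downgrade n 1) (.inr (.inr (.inr (.inr (.inl (.inl (emulateC n C)))))))
  | .inr C => .appR (downgrade n 1) (.inr (.inr (.inr (.inr (.inl (.inr (emulateC n C)))))))
  | .caseS C t₁ t₂ => .caseS (.appR (caseSumU n) (.appR (upgrade n 1) (emulateC n C)))
      (emulate n t₁) (emulate n t₂)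
  | .caseL t C t₂ => .caseL (.app (caseSumU n) (.app (upgrade n 1) (emulate n t)))
      (emulateC n C) (emulate n t₂)
  | .caseR t t₁ C => .caseR (.app (caseSumU n) (.app (upgrade n 1) (emulate n t)))
      (emulate n t₁) (emulateC n C)
  | .seqL C t => .seqL (.appR (caseUnitU n) (.appR (upgrade n 1) (emulateC n C))) (emulate n t)
  | .seqR t C => .seqR (.app (caseUnitU n) (.app (upgrade n 1) (emulate n t))) (emulateC n C)
  | .tifC C t₁ t₂ => .tifC (.appR (caseBoolU n) (.appR (upgrade n 1) (emulateC n C)))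
      (emulate n t₁) (emulate n t₂)
  | .tifT t C t₂ => .tifT (.app (caseBoolU n) (.app (upgrade n 1) (emulate n t)))
      (emulateC n C) (emulate n t₂)
  | .tifF t t₁ C => .tifF (.app (caseBoolU n) (.app (upgrade n 1) (emulate n t)))
      (emulate n t₁) (emulateC n C)

/-- the approximate back-translation `⟨⟨C̲⟩⟩_{τ;m} := emulate_{m+1}(C̲)[inject_{τ;m} ·]`,
as an operation plugging a λτ term into the back-translated context. -/
def backtrPlug (τ : Ty) (m : ℕ) (C : UPC) (t : STm) : STm :=
  (emulateC (m+1) C).plug (.app (injectTm m τ) t)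

end FAC


namespace FAC

lemma liftS_var : liftS STm.var = STm.var := by
  funext n; cases n <;> rfl

lemma STm.subst_var (t : STm) : t.subst STm.var = t := by
  induction t <;> simp [STm.subst, liftS_var, *]

lemma liftU_var : liftU UTm.var = UTm.var := by
  funext n; cases n <;> rfl

lemma UTm.subst_var (t : UTm) : t.subst UTm.var = t := by
  induction t <;> simp [UTm.subst, liftU_var, *]

end FAC

open FAC in
/-- adequacy of the asymmetric logical relations ≲ₙ and ≳ₙ. -/
theorem logrel_adequacy :
    (∀ (n : ℕ) (t : STm) (u : UTm) (τ : Ty) (m : ℕ) (v : STm),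
        LogRelN .lt n [] t u τ.toP → SStepN m t v → SIsVal v → m ≤ n →
        UHalts u) ∧
    (∀ (n : ℕ) (t : STm) (u : UTm) (τ : Ty) (m : ℕ) (v : UTm),
        LogRelN .gt n [] t u τ.toP → UStepN m u v → UIsVal v → m ≤ n →
        SHalts t) :=  by
  constructor
  · intro n t u τ m v hrel hstep hval hm
    obtain ⟨hty, hws, h⟩ := hrel
    have henv : EnvRel .lt n [] STm.var UTm.var := by
      intro i τ' hτ'; simp at hτ'
    have hcont : ContRel .lt n (Ty.toP τ) SEC.hole UEC.hole := by
      refine ⟨trivial, trivial, ?_⟩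
      intro i hi vs vu hvs hvu hrel' _
      exact ⟨0, vu, rfl, hvu⟩
    have := h n le_rfl STm.var UTm.var henv SEC.hole UEC.hole hcont
    rw [STm.subst_var, UTm.subst_var] at this
    exact this ⟨m, hm, v, hstep, hval⟩
  · intro n t u τ m v hrel hstep hval hm
    obtain ⟨hty, hws, h⟩ := hrel
    have henv : EnvRel .gt n [] STm.var UTm.var := by
      intro i τ' hτ'; simp at hτ'
    have hcont : ContRel .gt n (Ty.toP τ) SEC.hole UEC.hole := by
      refine ⟨trivial, trivial, ?_⟩
      intro i hi vs vu hvs hvu hrel' _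
      exact ⟨0, vs, rfl, hvs⟩
    have := h n le_rfl STm.var UTm.var henv SEC.hole UEC.hole hcont
    rw [STm.subst_var, UTm.subst_var] at this
    exact this ⟨m, hm, v, hstep, hval⟩
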